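/- arXiv:2206.13400 — 4 statements merged into one kernel-verified Lean document; each statement's English description precedes it below -/
import Mathlib

section
/- Let N = (N₀, N₁) be a pair of measurable functions from a Banach space X to [0,∞], let E be a Banach function space over (0,∞), and define K(x,t) = inf{N₀(x−v) + t N₁(v) : v ∈ X}, N_E(x) = ‖t ↦ K(x,t)/t‖_E, and the mean-method quantity N_E^{L⁰}(x) = inf over measurable u : (0,∞) → X of ‖t ↦ N₀(x − u(t))/t‖_E + ‖t ↦ N₁(u(t))‖_E. Then N_E(x) ≤ N_E^{L⁰}(x) ≤ 2 N_E(x) for every x ∈ X. -/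
/-! The inequality `N_E ≤ N_E^{L⁰}` is immediate from `K(x,t) ≤ N₀(x - u(t)) + t N₁(u(t))`.
For the converse fix `b > 1`, pick near-minimisers `v_k` of `K(x, b^k)` for every `k ∈ ℤ` and
use the step function `u(t) = v_{⌊log_b t⌋}`, which is measurable because it factors through `ℤ`.
Monotonicity of `K(x, ·)` gives `N₀(x - u(t)) + t N₁(u(t)) ≤ b (K(x,t) + error)`, and each of the
two terms of the mean method is then at most `b (N_E(x) + ‖error/t‖_E)`. The errors are chosen
proportional to `ε t min{1, t⁻²}`, whose quotient by `t` has finite `E`-norm, so letting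
`ε → 0` with `b = 1 + ε` gives `N_E^{L⁰} ≤ 2 N_E`. -/

open Set MeasureTheory Real
open scoped ENNReal NNReal

/-- The `K`-function of the interpolation couple `(N₀, N₁)`. -/
noncomputable def Kfun {X : Type*} [AddGroup X] (N₀ N₁ : X → ℝ≥0∞) (x : X) (t : ℝ) : ℝ≥0∞ :=
  ⨅ v : X, N₀ (x - v) + ENNReal.ofReal t * N₁ v

/-- The interpolation function of the `K`-method: `N_E(x) = ‖t ↦ K(x,t)/t‖_E`. -/
noncomputable def kMethod {X : Type*} [AddGroup X] (E : (ℝ → ℝ≥0∞) → ℝ≥0∞)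
    (N₀ N₁ : X → ℝ≥0∞) (x : X) : ℝ≥0∞ :=
  E (fun t => if 0 < t then Kfun N₀ N₁ x t / ENNReal.ofReal t else 0)

/-- The interpolation function of the mean method over measurable competitors:
`N_E^{L⁰}(x) = inf over measurable u of ‖t ↦ N₀(x-u(t))/t‖_E + ‖t ↦ N₁(u(t))‖_E`. -/
noncomputable def meanMethodL0 {X : Type*} [AddGroup X] [MeasurableSpace X]
    (E : (ℝ → ℝ≥0∞) → ℝ≥0∞) (N₀ N₁ : X → ℝ≥0∞) (x : X) : ℝ≥0∞ :=
  ⨅ (u : ℝ → X) (_ : Measurable u),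
    E (fun t => if 0 < t then N₀ (x - u t) / ENNReal.ofReal t else 0)
      + E (fun t => if 0 < t then N₁ (u t) else 0)

open Filter Topology

namespace Real

lemma zpow_floor_logb_le {b t : ℝ} (hb : 1 < b) (ht : 0 < t) : b ^ ⌊logb b t⌋ ≤ t := by
  have h := (rpow_le_rpow_left_iff hb).2 (Int.floor_le (logb b t))
  rwa [rpow_intCast, rpow_logb (by linarith) hb.ne' ht] at h

lemma lt_zpow_floor_logb_add_one {b t : ℝ} (hb : 1 < b) (ht : 0 < t) :
    t < b ^ (⌊logb b t⌋ + 1) := by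
  have h := (rpow_lt_rpow_left_iff hb).2 (Int.lt_floor_add_one (logb b t))
  rwa [rpow_logb (by linarith) hb.ne' ht, ← Int.cast_one, ← Int.cast_add, rpow_intCast] at h

end Real

namespace ENNReal

lemma div_le_div_and_le_div_of_add_mul_le {a c d t : ℝ≥0∞} (ht₀ : t ≠ 0) (ht : t ≠ ∞)
    (h : a + t * c ≤ d) : a / t ≤ d / t ∧ c ≤ d / t :=
  ⟨ENNReal.div_le_div_right (le_self_add.trans h) t,
    (ENNReal.le_div_iff_mul_le (Or.inl ht₀) (Or.inl ht)).2 (mul_comm c t ▸ le_add_self.trans h)⟩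

lemma le_mul_of_forall_le_mul_ofReal_add {a c K C : ℝ≥0∞} (hc : c ≠ ∞) (hC : C ≠ ∞)
    (h : ∀ ε : ℝ, 0 < ε → a ≤ c * (ENNReal.ofReal (1 + ε) * (K + ENNReal.ofReal ε * C))) :
    a ≤ c * K := by
  have hlim : Tendsto (fun ε : ℝ => c * (ENNReal.ofReal (1 + ε) * (K + ENNReal.ofReal ε * C)))
      (𝓝[>] 0) (𝓝 (c * (ENNReal.ofReal (1 + 0) * (K + ENNReal.ofReal 0 * C)))) := by
    refine ENNReal.Tendsto.const_mul (ENNReal.Tendsto.mul ?_ (by simp) ?_ (by simp)) (Or.inr hc)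
    · exact (ENNReal.continuous_ofReal.tendsto _).comp
        ((continuous_const.add continuous_id).tendsto 0) |>.mono_left nhdsWithin_le_nhds
    · refine tendsto_const_nhds.add (ENNReal.Tendsto.mul_const ?_ (Or.inr hC))
      exact (ENNReal.continuous_ofReal.tendsto 0).mono_left nhdsWithin_le_nhds
  simp only [add_zero, ofReal_one, one_mul, ofReal_zero, zero_mul] at hlim
  exact ge_of_tendsto hlim (eventually_nhdsWithin_of_forall h)

end ENNReal

section Kfun

variable {X : Type*} [AddGroup X] (N₀ N₁ : X → ℝ≥0∞) (x : X)

lemma Kfun_monotone : Monotone (Kfun N₀ N₁ x) := fun _ _ hst =>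
  iInf_mono fun _ => by gcongr

lemma Kfun_le (t : ℝ) (v : X) : Kfun N₀ N₁ x t ≤ N₀ (x - v) + ENNReal.ofReal t * N₁ v :=
  iInf_le _ v

lemma exists_le_Kfun_add (t : ℝ) {δ : ℝ≥0∞} (hδ : δ ≠ 0) :
    ∃ v, N₀ (x - v) + ENNReal.ofReal t * N₁ v ≤ Kfun N₀ N₁ x t + δ := by
  by_cases hK : Kfun N₀ N₁ x t = ∞
  · exact ⟨0, by simp [hK]⟩
  · obtain ⟨v, hv⟩ := iInf_lt_iff.mp (ENNReal.lt_add_right hK hδ)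
    exact ⟨v, hv.le⟩

lemma Kfun_div_le (v : X) {t : ℝ} (ht : 0 < t) :
    Kfun N₀ N₁ x t / ENNReal.ofReal t ≤ N₀ (x - v) / ENNReal.ofReal t + N₁ v := by
  calc Kfun N₀ N₁ x t / ENNReal.ofReal t
      ≤ (N₀ (x - v) + ENNReal.ofReal t * N₁ v) / ENNReal.ofReal t :=
        ENNReal.div_le_div_right (Kfun_le N₀ N₁ x t v) _
    _ = N₀ (x - v) / ENNReal.ofReal t + N₁ v := by
        rw [ENNReal.add_div, mul_comm (ENNReal.ofReal t),
          ENNReal.mul_div_cancel_right (by simpa using ht) ENNReal.ofReal_ne_top]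

lemma exists_measurable_le_mul_Kfun_add [MeasurableSpace X] {b : ℝ} (hb : 1 < b)
    {g : ℝ → ℝ≥0∞} (hg : AntitoneOn g (Ioi 0)) (hg₀ : ∀ t, 0 < t → g t ≠ 0) :
    ∃ u : ℝ → X, Measurable u ∧ ∀ t, 0 < t →
      N₀ (x - u t) + ENNReal.ofReal t * N₁ (u t)
        ≤ ENNReal.ofReal b * (Kfun N₀ N₁ x t + ENNReal.ofReal t * g t) := by
  have hb₀ : 0 < b := by linarith
  -- `b^k g(b^{k+1}) ≤ t g(t)` on `[b^k, b^{k+1})` because `g` is antitone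
  have hδ (k : ℤ) : ENNReal.ofReal (b ^ k) * g (b ^ (k + 1)) ≠ 0 :=
    mul_ne_zero (by simpa using zpow_pos hb₀ k) (hg₀ _ (zpow_pos hb₀ _))
  choose v hv using fun k : ℤ => exists_le_Kfun_add N₀ N₁ x (b ^ k) (hδ k)
  refine ⟨fun t => v ⌊logb b t⌋, measurable_from_top.comp
    (Int.measurable_floor.comp (measurable_log.div_const _)), fun t ht => ?_⟩
  set k := ⌊logb b t⌋
  have hlow : b ^ k ≤ t := zpow_floor_logb_le hb ht
  have hupp : t ≤ b * b ^ k := by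
    rw [← zpow_one_add₀ hb₀.ne', add_comm]; exact (lt_zpow_floor_logb_add_one hb ht).le
  have hb_one : (1 : ℝ≥0∞) ≤ ENNReal.ofReal b := by simpa using hb.le
  calc N₀ (x - v k) + ENNReal.ofReal t * N₁ (v k)
      ≤ ENNReal.ofReal b * N₀ (x - v k) + ENNReal.ofReal (b * b ^ k) * N₁ (v k) := by
        gcongr
        exact le_mul_of_one_le_left zero_le hb_one
    _ = ENNReal.ofReal b * (N₀ (x - v k) + ENNReal.ofReal (b ^ k) * N₁ (v k)) := by
        rw [mul_add, ← mul_assoc, ← ENNReal.ofReal_mul hb₀.le]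
    _ ≤ ENNReal.ofReal b
          * (Kfun N₀ N₁ x (b ^ k) + ENNReal.ofReal (b ^ k) * g (b ^ (k + 1))) := by
        gcongr ENNReal.ofReal b * ?_; exact hv k
    _ ≤ ENNReal.ofReal b * (Kfun N₀ N₁ x t + ENNReal.ofReal t * g t) := by
        gcongr
        · exact Kfun_monotone N₀ N₁ x hlow
        · exact hg ht (zpow_pos hb₀ _) (lt_zpow_floor_logb_add_one hb ht).le

end Kfun

section Methods

variable {X : Type*} [AddGroup X] [MeasurableSpace X] (N₀ N₁ : X → ℝ≥0∞)
  {E : (ℝ → ℝ≥0∞) → ℝ≥0∞}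

lemma kMethod_le_meanMethodL0 (hE_mono : ∀ f g : ℝ → ℝ≥0∞, (∀ t, f t ≤ g t) → E f ≤ E g)
    (hE_add : ∀ f g : ℝ → ℝ≥0∞, E (fun t => f t + g t) ≤ E f + E g) (x : X) :
    kMethod E N₀ N₁ x ≤ meanMethodL0 E N₀ N₁ x := by
  refine le_iInf₂ fun u _ => (hE_mono _ _ fun t => ?_).trans (hE_add _ _)
  by_cases ht : 0 < t
  · simpa only [if_pos ht] using Kfun_div_le N₀ N₁ x (u t) ht
  · simp [ht]

lemma meanMethodL0_le_two_mul (hE_mono : ∀ f g : ℝ → ℝ≥0∞, (∀ t, f t ≤ g t) → E f ≤ E g)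
    (hE_add : ∀ f g : ℝ → ℝ≥0∞, E (fun t => f t + g t) ≤ E f + E g)
    (hE_smul : ∀ (c : ℝ≥0∞) (f : ℝ → ℝ≥0∞), E (fun t => c * f t) = c * E f)
    (x : X) {b : ℝ} (hb : 1 < b) {g : ℝ → ℝ≥0∞} (hg : AntitoneOn g (Ioi 0))
    (hg₀ : ∀ t, 0 < t → g t ≠ 0) :
    meanMethodL0 E N₀ N₁ x ≤ 2 * (ENNReal.ofReal b * (kMethod E N₀ N₁ x + E g)) := by
  obtain ⟨u, hu, hbound⟩ := exists_measurable_le_mul_Kfun_add N₀ N₁ x hb hg hg₀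
  set majorant : ℝ → ℝ≥0∞ := fun t => ENNReal.ofReal b *
    ((if 0 < t then Kfun N₀ N₁ x t / ENNReal.ofReal t else 0) + g t)
  have hmajorant {t : ℝ} (ht : 0 < t) : ENNReal.ofReal b * (Kfun N₀ N₁ x t
      + ENNReal.ofReal t * g t) / ENNReal.ofReal t = majorant t := by
    have ht₀ : ENNReal.ofReal t ≠ 0 := by simpa using ht
    rw [mul_div_assoc, ENNReal.add_div, mul_comm (ENNReal.ofReal t),
      ENNReal.mul_div_cancel_right ht₀ ENNReal.ofReal_ne_top]
    simp only [majorant, if_pos ht]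
  have hterms (t : ℝ) : (if 0 < t then N₀ (x - u t) / ENNReal.ofReal t else 0) ≤ majorant t ∧
      (if 0 < t then N₁ (u t) else 0) ≤ majorant t := by
    by_cases ht : 0 < t
    · simp only [if_pos ht, ← hmajorant ht]
      exact ENNReal.div_le_div_and_le_div_of_add_mul_le (by simpa using ht)
        ENNReal.ofReal_ne_top (hbound t ht)
    · simp [ht]
  have hE_majorant : E majorant ≤ ENNReal.ofReal b * (kMethod E N₀ N₁ x + E g) := by
    rw [hE_smul]; gcongr; exact hE_add _ _
  calc meanMethodL0 E N₀ N₁ x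
      ≤ E (fun t => if 0 < t then N₀ (x - u t) / ENNReal.ofReal t else 0)
        + E (fun t => if 0 < t then N₁ (u t) else 0) := iInf₂_le u hu
    _ ≤ E majorant + E majorant :=
        add_le_add (hE_mono _ _ fun t => (hterms t).1) (hE_mono _ _ fun t => (hterms t).2)
    _ ≤ 2 * (ENNReal.ofReal b * (kMethod E N₀ N₁ x + E g)) := by
        rw [← two_mul]; gcongr

end Methods

lemma antitoneOn_ofReal_min_one_div_sq :
    AntitoneOn (fun t : ℝ => ENNReal.ofReal (min 1 (1 / t ^ 2))) (Ioi 0) :=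
  fun s hs _ _ hst => by
    have : 0 < s := hs
    dsimp only
    gcongr

theorem stmt3_general {X : Type*} [NormedAddCommGroup X] [MeasurableSpace X]
    (N₀ N₁ : X → ℝ≥0∞)
    (E : (ℝ → ℝ≥0∞) → ℝ≥0∞)
    (hE_mono : ∀ f g : ℝ → ℝ≥0∞, (∀ t, f t ≤ g t) → E f ≤ E g)
    (hE_add : ∀ f g : ℝ → ℝ≥0∞, E (fun t => f t + g t) ≤ E f + E g)
    (hE_smul : ∀ (c : ℝ≥0∞) (f : ℝ → ℝ≥0∞), E (fun t => c * f t) = c * E f)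
    -- `L¹ ∩ L∞ (0,∞) ⊆ E`, used through the function `t ↦ min{1, 1/t²}`
    (hE_fin : E (fun t => ENNReal.ofReal (min 1 (1 / t ^ 2))) ≠ ⊤)
    (x : X) :
    kMethod E N₀ N₁ x ≤ meanMethodL0 E N₀ N₁ x ∧
    meanMethodL0 E N₀ N₁ x ≤ 2 * kMethod E N₀ N₁ x := by
  refine ⟨kMethod_le_meanMethodL0 N₀ N₁ hE_mono hE_add x,
    ENNReal.le_mul_of_forall_le_mul_ofReal_add (by simp) hE_fin fun ε hε => ?_⟩
  have hg : AntitoneOn (fun t => ENNReal.ofReal ε * ENNReal.ofReal (min 1 (1 / t ^ 2))) (Ioi 0) :=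
    fun s hs t ht hst => mul_le_mul_right (antitoneOn_ofReal_min_one_div_sq hs ht hst) _
  have hg₀ (t : ℝ) (ht : 0 < t) : ENNReal.ofReal ε * ENNReal.ofReal (min 1 (1 / t ^ 2)) ≠ 0 :=
    mul_ne_zero (ENNReal.ofReal_pos.2 hε).ne'
      (ENNReal.ofReal_pos.2 (lt_min one_pos (by positivity))).ne'
  simpa only [hE_smul] using meanMethodL0_le_two_mul N₀ N₁ hE_mono hE_add hE_smul x
    (by linarith : 1 < 1 + ε) hg hg₀

/-- equivalence of the `K`-method and the mean method:
`N_E(x) ≤ N_E^{L⁰}(x) ≤ 2·N_E(x)` for every `x ∈ X`. -/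
theorem stmt3 {X : Type*} [NormedAddCommGroup X] [MeasurableSpace X] [BorelSpace X]
    (N₀ N₁ : X → ℝ≥0∞) (hN₀ : Measurable N₀) (hN₁ : Measurable N₁)
    (E : (ℝ → ℝ≥0∞) → ℝ≥0∞)
    (hE_mono : ∀ f g : ℝ → ℝ≥0∞, (∀ t, f t ≤ g t) → E f ≤ E g)
    (hE_add : ∀ f g : ℝ → ℝ≥0∞, E (fun t => f t + g t) ≤ E f + E g)
    (hE_smul : ∀ (c : ℝ≥0∞) (f : ℝ → ℝ≥0∞), E (fun t => c * f t) = c * E f)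
    -- `L¹ ∩ L∞ (0,∞) ⊆ E`, used through the function `t ↦ min{1, 1/t²}`
    (hE_fin : E (fun t => ENNReal.ofReal (min 1 (1 / t ^ 2))) ≠ ⊤)
    (x : X) :
    kMethod E N₀ N₁ x ≤ meanMethodL0 E N₀ N₁ x ∧
    meanMethodL0 E N₀ N₁ x ≤ 2 * kMethod E N₀ N₁ x :=
  stmt3_general N₀ N₁ E hE_mono hE_add hE_smul hE_fin x
end

section
/- Let A ⊆ X×X be m-accretive of type ω ≥ 0 on a Banach space X, with resolvent J_t = (I + tA)^{-1} for tω < 1, and let K(x,t) = inf{‖x−v‖_X + t|Av| : v ∈ dom A}, where |Av| = inf{‖f‖ : (v,f) ∈ A}. Then for every x ∈ X and t > 0 with tω < 1: (1/2)·K(x,t)/t ≤ ‖x − J_t x‖_X / t ≤ ((2−tω)/(1−tω))·K(x,t)/t. -/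
open Set Real
open scoped ENNReal NNReal

/-- The set norm `|B| = inf{‖f‖ : f ∈ B}` (with `inf ∅ = ∞`) of the image set `Av`
of an operator (relation) `A ⊆ X × X` at `v`. -/
noncomputable def setNormRel {X : Type*} [NormedAddCommGroup X]
    (A : Set (X × X)) (v : X) : ℝ≥0∞ :=
  ⨅ (f : X) (_ : (v, f) ∈ A), (‖f‖₊ : ℝ≥0∞)

/-- `K(x,t) = inf{‖x-v‖ + t|Av| : v}` (the infimum is effectively over `v ∈ dom A`). -/
noncomputable def Krel {X : Type*} [NormedAddCommGroup X]
    (A : Set (X × X)) (x : X) (t : ℝ) : ℝ≥0∞ :=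
  ⨅ v : X, (‖x - v‖₊ : ℝ≥0∞) + ENNReal.ofReal t * setNormRel A v

/-- Accretivity of type `ω`. -/
def AccretiveOfType {X : Type*} [NormedAddCommGroup X] [NormedSpace ℝ X]
    (A : Set (X × X)) (ω : ℝ) : Prop :=
  ∀ p ∈ A, ∀ q ∈ A, ∀ lam : ℝ, 0 < lam → lam * ω < 1 →
    (1 - lam * ω) * ‖p.1 - q.1‖ ≤ ‖p.1 - q.1 + lam • (p.2 - q.2)‖


/-!
For the lower bound take `v = J_t x` in the infimum: its `A`-value `(x - J_t x)/t` gives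
`K(x,t) ≤ 2‖x - J_t x‖`. For the upper bound fix `(v, f) ∈ A` and split
`x - J_t x = (x - v) + (v - J_t v) + (J_t v - J_t x)`. Accretivity, applied to the graph point
`(J_t v, (v - J_t v)/t)` and another graph point, shows both that `J_t` is
`1/(1-tω)`-Lipschitz and that `‖v - J_t v‖ ≤ t‖f‖/(1-tω)`.
-/

def IsResolvent {X : Type*} [NormedAddCommGroup X] [NormedSpace ℝ X]
    (A : Set (X × X)) (ω : ℝ) (J : ℝ → X → X) : Prop :=
  ∀ lam : ℝ, 0 < lam → lam * ω < 1 → ∀ x : X, (J lam x, lam⁻¹ • (x - J lam x)) ∈ A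

section Krel

variable {X : Type*} [NormedAddCommGroup X] {A : Set (X × X)} {x : X} {t : ℝ}

theorem setNormRel_le_of_mem {v f : X} (h : (v, f) ∈ A) : setNormRel A v ≤ ‖f‖₊ :=
  iInf₂_le f h

theorem ofReal_norm_add_mul_norm (ht : 0 ≤ t) (a b : X) :
    ENNReal.ofReal (‖a‖ + t * ‖b‖) = ‖a‖₊ + ENNReal.ofReal t * ‖b‖₊ := by
  rw [ENNReal.ofReal_add (norm_nonneg _) (by positivity), ENNReal.ofReal_mul ht,
    ENNReal.ofReal_eq_coe_nnreal (norm_nonneg a), ENNReal.ofReal_eq_coe_nnreal (norm_nonneg b)]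
  rfl

theorem Krel_le_of_mem (ht : 0 ≤ t) {v f : X} (h : (v, f) ∈ A) :
    Krel A x t ≤ ENNReal.ofReal (‖x - v‖ + t * ‖f‖) := by
  rw [ofReal_norm_add_mul_norm ht]
  exact (iInf_le _ v).trans (by gcongr; exact setNormRel_le_of_mem h)

/-- Needs `t > 0`: at `t = 0` the infimum also sees `v ∉ dom A`, through `0 * ∞ = 0`. -/
theorem ofReal_le_Krel {a : ℝ} (ht : 0 < t) (h : ∀ v f, (v, f) ∈ A → a ≤ ‖x - v‖ + t * ‖f‖) :
    ENNReal.ofReal a ≤ Krel A x t := by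
  have ht₀ : ENNReal.ofReal t ≠ 0 := (ENNReal.ofReal_pos.2 ht).ne'
  refine le_iInf fun v => ?_
  simp only [setNormRel, ENNReal.mul_iInf_of_ne ht₀ ENNReal.ofReal_ne_top, ENNReal.add_iInf]
  refine le_iInf₂ fun f hvf => ?_
  rw [← ofReal_norm_add_mul_norm ht.le]
  exact ENNReal.ofReal_le_ofReal (h v f hvf)

end Krel

section Resolvent

variable {X : Type*} [NormedAddCommGroup X] [NormedSpace ℝ X] {A : Set (X × X)} {ω t : ℝ}
  {J : ℝ → X → X}

theorem Krel_le_two_mul_norm_sub_resolvent {x : X} (ht : 0 < t)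
    (hJx : (J t x, t⁻¹ • (x - J t x)) ∈ A) :
    Krel A x t ≤ 2 * ‖x - J t x‖₊ := by
  have hAt : t * ‖t⁻¹ • (x - J t x)‖ = ‖x - J t x‖ := by
    rw [norm_smul, norm_inv, Real.norm_of_nonneg ht.le, mul_inv_cancel_left₀ ht.ne']
  calc Krel A x t ≤ ENNReal.ofReal (‖x - J t x‖ + ‖x - J t x‖) := by
        simpa only [hAt] using Krel_le_of_mem ht.le hJx
    _ = 2 * ‖x - J t x‖₊ := by
        rw [← two_mul, ENNReal.ofReal_mul zero_le_two, ENNReal.ofReal_ofNat,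
          ENNReal.ofReal_eq_coe_nnreal (norm_nonneg _)]
        rfl

namespace AccretiveOfType

/-- The hypothesis says `y = J_t v`. -/
theorem mul_norm_sub_le (hA : AccretiveOfType A ω) (ht : 0 < t) (htω : t * ω < 1)
    {v y u g : X} (hy : (y, t⁻¹ • (v - y)) ∈ A) (hug : (u, g) ∈ A) :
    (1 - t * ω) * ‖y - u‖ ≤ ‖v - (u + t • g)‖ := by
  have key := hA _ hy _ hug t ht htω
  have heq : y - u + t • (t⁻¹ • (v - y) - g) = v - (u + t • g) := by
    rw [smul_sub, smul_smul, mul_inv_cancel₀ ht.ne', one_smul]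
    abel
  rwa [heq] at key

theorem mul_norm_resolvent_sub_resolvent_le (hA : AccretiveOfType A ω) (hJ : IsResolvent A ω J)
    (ht : 0 < t) (htω : t * ω < 1) (x v : X) :
    (1 - t * ω) * ‖J t v - J t x‖ ≤ ‖v - x‖ := by
  have := hA.mul_norm_sub_le ht htω (hJ t ht htω v) (hJ t ht htω x)
  rwa [smul_smul, mul_inv_cancel₀ ht.ne', one_smul, add_sub_cancel] at this

theorem mul_norm_resolvent_sub_le (hA : AccretiveOfType A ω) (hJ : IsResolvent A ω J)
    (ht : 0 < t) (htω : t * ω < 1) {v f : X} (hvf : (v, f) ∈ A) :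
    (1 - t * ω) * ‖J t v - v‖ ≤ t * ‖f‖ := by
  have := hA.mul_norm_sub_le ht htω (hJ t ht htω v) hvf
  rwa [sub_add_cancel_left, norm_neg, norm_smul, Real.norm_of_nonneg ht.le] at this

theorem norm_sub_resolvent_le (hA : AccretiveOfType A ω) (hJ : IsResolvent A ω J)
    (ht : 0 < t) (htω : t * ω < 1) (x : X) {v f : X} (hvf : (v, f) ∈ A) :
    ‖x - J t x‖ ≤ (2 - t * ω) / (1 - t * ω) * (‖x - v‖ + t * ‖f‖) := by
  have hpos : 0 < 1 - t * ω := by linarith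
  have hlip := hA.mul_norm_resolvent_sub_resolvent_le hJ ht htω x v
  have hres := hA.mul_norm_resolvent_sub_le hJ ht htω hvf
  have htri : ‖x - J t x‖ ≤ ‖x - v‖ + ‖J t v - v‖ + ‖J t v - J t x‖ :=
    calc ‖x - J t x‖ = ‖(x - v) - (J t v - v) + (J t v - J t x)‖ := by congr 1; abel
      _ ≤ ‖x - v‖ + ‖J t v - v‖ + ‖J t v - J t x‖ :=
        (norm_add_le _ _).trans (by gcongr; exact norm_sub_le _ _)
  rw [norm_sub_rev v x] at hlip
  rw [div_mul_eq_mul_div, le_div_iff₀ hpos]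
  nlinarith [mul_le_mul_of_nonneg_left htri hpos.le,
    mul_nonneg hpos.le (mul_nonneg ht.le (norm_nonneg f))]

theorem norm_sub_resolvent_le_mul_Krel (hA : AccretiveOfType A ω) (hJ : IsResolvent A ω J)
    (ht : 0 < t) (htω : t * ω < 1) (x : X) :
    (‖x - J t x‖₊ : ℝ≥0∞) ≤ ENNReal.ofReal ((2 - t * ω) / (1 - t * ω)) * Krel A x t := by
  set C := (2 - t * ω) / (1 - t * ω)
  have hC : 0 < C := div_pos (by linarith) (by linarith)
  have hK : ENNReal.ofReal (‖x - J t x‖ / C) ≤ Krel A x t :=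
    ofReal_le_Krel ht fun v f hvf => (div_le_iff₀' hC).2 (hA.norm_sub_resolvent_le hJ ht htω x hvf)
  calc (‖x - J t x‖₊ : ℝ≥0∞) = ENNReal.ofReal (C * (‖x - J t x‖ / C)) := by
        rw [mul_div_cancel₀ _ hC.ne', ENNReal.ofReal_eq_coe_nnreal (norm_nonneg _)]
        rfl
    _ ≤ ENNReal.ofReal C * Krel A x t := by
        rw [ENNReal.ofReal_mul hC.le]
        gcongr

end AccretiveOfType

end Resolvent

theorem stmt6_general {X : Type*} [NormedAddCommGroup X] [NormedSpace ℝ X]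
    (A : Set (X × X)) (ω : ℝ) (hacc : AccretiveOfType A ω)
    (J : ℝ → X → X)
    (hJ : ∀ lam : ℝ, 0 < lam → lam * ω < 1 → ∀ x : X,
      (J lam x, lam⁻¹ • (x - J lam x)) ∈ A)
    (x : X) (t : ℝ) (ht : 0 < t) (htω : t * ω < 1) :
    (1 / 2 : ℝ≥0∞) * (Krel A x t / ENNReal.ofReal t)
        ≤ (‖x - J t x‖₊ : ℝ≥0∞) / ENNReal.ofReal t ∧
    (‖x - J t x‖₊ : ℝ≥0∞) / ENNReal.ofReal t
        ≤ ENNReal.ofReal ((2 - t * ω) / (1 - t * ω)) * (Krel A x t / ENNReal.ofReal t) := by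
  have hlower := Krel_le_two_mul_norm_sub_resolvent ht (hJ t ht htω x)
  have hupper := hacc.norm_sub_resolvent_le_mul_Krel hJ ht htω x
  constructor
  · calc (1 / 2 : ℝ≥0∞) * (Krel A x t / ENNReal.ofReal t)
        ≤ 1 / 2 * (2 * ‖x - J t x‖₊ / ENNReal.ofReal t) := by gcongr
      _ = ‖x - J t x‖₊ / ENNReal.ofReal t := by
        rw [← mul_div_assoc, ← mul_assoc, one_div,
          ENNReal.inv_mul_cancel two_ne_zero ENNReal.ofNat_ne_top, one_mul]
  · calc (‖x - J t x‖₊ : ℝ≥0∞) / ENNReal.ofReal t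
        ≤ ENNReal.ofReal ((2 - t * ω) / (1 - t * ω)) * Krel A x t / ENNReal.ofReal t := by
          gcongr
      _ = _ := mul_div_assoc _ _ _

/-- Let `A ⊆ X×X` be m-accretive of type `ω ≥ 0` with resolvent
`J_t = (I + tA)⁻¹` (encoded by `(J t x, t⁻¹•(x - J t x)) ∈ A` for all `x`, which expresses
both surjectivity of `I + tA` and the defining relation of the resolvent). Then for every
`x ∈ X` and `t > 0` with `tω < 1`:
`(1/2)·K(x,t)/t ≤ ‖x - J_t x‖/t ≤ ((2-tω)/(1-tω))·K(x,t)/t`. -/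
theorem stmt6 {X : Type*} [NormedAddCommGroup X] [NormedSpace ℝ X]
    (A : Set (X × X)) (ω : ℝ) (hω : 0 ≤ ω) (hacc : AccretiveOfType A ω)
    (J : ℝ → X → X)
    (hJ : ∀ lam : ℝ, 0 < lam → lam * ω < 1 → ∀ x : X,
      (J lam x, lam⁻¹ • (x - J lam x)) ∈ A)
    (x : X) (t : ℝ) (ht : 0 < t) (htω : t * ω < 1) :
    (1 / 2 : ℝ≥0∞) * (Krel A x t / ENNReal.ofReal t)
        ≤ (‖x - J t x‖₊ : ℝ≥0∞) / ENNReal.ofReal t ∧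
    (‖x - J t x‖₊ : ℝ≥0∞) / ENNReal.ofReal t
        ≤ ENNReal.ofReal ((2 - t * ω) / (1 - t * ω)) * (Krel A x t / ENNReal.ofReal t) :=
  stmt6_general A ω hacc J hJ x t ht htω
end

section
/- Let A be m-accretive of type ω ≥ 0 on a Banach space X generating the semigroup S. Then for every x ∈ closure(dom A) and t, λ > 0 with λω < 1: ‖x − J_λ x‖ ≤ (λ/(t(1−λω)))‖x − S(t)x‖ + ((2−λω)/(t(1−λω)))·∫₀ᵗ ‖x − S(s)x‖ ds. In particular, taking λ = t with tω < 1, ‖x − J_t x‖ ≤ ((3 − tω + e^{ωt})/(1−tω)) · (1/t)∫₀ᵗ ‖x − S(s)x‖ ds. -/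
/-!
Apply the integral-solution inequality to the pair `(J_λ x, A_λ x) ∈ A`. Since
`λ A_λ x = x - J_λ x`, the bracket `[u r - J_λ x, -A_λ x]` is at most
`(‖x - u r‖ - ‖u r - J_λ x‖) / λ`; combined with the triangle inequality
`‖x - J_λ x‖ ≤ ‖x - u r‖ + ‖u r - J_λ x‖` averaged over `[0, t]`, this isolates `‖x - J_λ x‖`.
For `λ = t`, the semigroup property and the Lipschitz bound give
`‖x - S t x‖ ≤ ‖x - S s x‖ + e^{ωt} ‖x - S (t - s) x‖`, and averaging over `s ∈ [0, t]` bounds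
`‖x - S t x‖` by `1 + e^{ωt}` times the mean of `‖x - S s x‖`.
-/

open Set Real MeasureTheory
open scoped ENNReal NNReal

/-- The domain of a relation `A ⊆ X × X`. -/
def relDom {X : Type*} (A : Set (X × X)) : Set X := {v | ∃ f, (v, f) ∈ A}

/-- The Kato bracket `[x,y] = inf_{λ>0} (‖x+λy‖ - ‖x‖)/λ`. -/
noncomputable def katoBracket {X : Type*} [NormedAddCommGroup X] [NormedSpace ℝ X]
    (x y : X) : ℝ :=
  sInf ((fun lam : ℝ => (‖x + lam • y‖ - ‖x‖) / lam) '' Set.Ioi 0)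

section KatoBracket

variable {X : Type*} [NormedAddCommGroup X] [NormedSpace ℝ X]

theorem abs_norm_add_smul_sub_norm_div_le (z y : X) {lam : ℝ} (hlam : 0 < lam) :
    |(‖z + lam • y‖ - ‖z‖) / lam| ≤ ‖y‖ := by
  rw [abs_div, abs_of_pos hlam, div_le_iff₀ hlam]
  calc |‖z + lam • y‖ - ‖z‖| ≤ ‖z + lam • y - z‖ := abs_norm_sub_norm_le _ _
    _ = ‖y‖ * lam := by rw [add_sub_cancel_left, norm_smul, Real.norm_of_nonneg hlam.le, mul_comm]

theorem katoBracket_eq_iInf (z y : X) :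
    katoBracket z y = ⨅ lam : Ioi (0 : ℝ), (‖z + (lam : ℝ) • y‖ - ‖z‖) / lam := by
  rw [katoBracket, image_eq_range]
  rfl

theorem bddBelow_range_norm_add_smul_sub_norm_div (z y : X) :
    BddBelow (range fun lam : Ioi (0 : ℝ) => (‖z + (lam : ℝ) • y‖ - ‖z‖) / lam) :=
  ⟨-‖y‖, by
    rintro _ ⟨lam, rfl⟩
    exact neg_le_of_abs_le (abs_norm_add_smul_sub_norm_div_le z y lam.2)⟩

theorem katoBracket_le (z y : X) {lam : ℝ} (hlam : 0 < lam) :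
    katoBracket z y ≤ (‖z + lam • y‖ - ‖z‖) / lam := by
  rw [katoBracket_eq_iInf]
  exact ciInf_le (bddBelow_range_norm_add_smul_sub_norm_div z y) ⟨lam, hlam⟩

theorem abs_katoBracket_le (z y : X) : |katoBracket z y| ≤ ‖y‖ := by
  refine abs_le.2 ⟨?_, ?_⟩
  · rw [katoBracket_eq_iInf]
    have : Nonempty (Ioi (0 : ℝ)) := ⟨⟨1, mem_Ioi.2 one_pos⟩⟩
    exact le_ciInf fun lam => neg_le_of_abs_le (abs_norm_add_smul_sub_norm_div_le z y lam.2)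
  · exact (katoBracket_le z y one_pos).trans
      (le_of_abs_le (abs_norm_add_smul_sub_norm_div_le z y one_pos))

/-- An infimum of continuous functions of `z`; this is what makes `r ↦ [u r, y]` measurable
along a continuous curve. -/
theorem upperSemicontinuous_katoBracket (y : X) :
    UpperSemicontinuous fun z : X => katoBracket z y := by
  simp_rw [katoBracket_eq_iInf]
  exact upperSemicontinuous_ciInf (fun z => bddBelow_range_norm_add_smul_sub_norm_div z y)
    fun lam => (by fun_prop : Continuous fun z : X => (‖z + (lam : ℝ) • y‖ - ‖z‖) / lam)
      |>.upperSemicontinuous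

theorem ContinuousOn.intervalIntegrable_katoBracket {u : ℝ → X} {a b : ℝ} (hab : a ≤ b)
    (hu : ContinuousOn u (Icc a b)) (y : X) :
    IntervalIntegrable (fun r => katoBracket (u r) y) volume a b := by
  set ū := IccExtend hab ((Icc a b).domRestrict u)
  have hū : Continuous ū := (continuousOn_iff_continuous_domRestrict.1 hu).Icc_extend'
  have hint : IntervalIntegrable (fun r => katoBracket (ū r) y) volume a b :=
    intervalIntegrable_const.mono_fun'
      ((upperSemicontinuous_katoBracket y).comp hū).measurable.aestronglyMeasurable
      (ae_of_all _ fun r => abs_katoBracket_le (ū r) y)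
  refine hint.congr fun r hr => ?_
  rw [uIoc_of_le hab] at hr
  simp [ū, IccExtend_of_mem hab _ (Ioc_subset_Icc_self hr)]

theorem katoBracket_sub_le (w x v : X) {lam : ℝ} (hlam : 0 < lam) :
    katoBracket (w - v) (-(lam⁻¹ • (x - v))) ≤ (‖x - w‖ - ‖w - v‖) / lam := by
  have hw : w - v + lam • -(lam⁻¹ • (x - v)) = -(x - w) := by
    rw [smul_neg, smul_inv_smul₀ hlam.ne']
    abel
  simpa only [hw, norm_neg] using katoBracket_le (w - v) (-(lam⁻¹ • (x - v))) hlam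

end KatoBracket

section IntegralSolution

variable {X : Type*} [NormedAddCommGroup X]

theorem mul_norm_sub_sub_integral_le {u : ℝ → X} {x v : X} {t : ℝ} (ht : 0 ≤ t)
    (hu : ContinuousOn u (Icc 0 t)) :
    t * ‖x - v‖ - ∫ r in (0 : ℝ)..t, ‖x - u r‖ ≤ ∫ r in (0 : ℝ)..t, ‖u r - v‖ := by
  have hu' : ContinuousOn u (uIcc 0 t) := by rwa [uIcc_of_le ht]
  have hxu : IntervalIntegrable (fun r => ‖x - u r‖) volume 0 t :=
    (continuousOn_const.sub hu').norm.intervalIntegrable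
  calc t * ‖x - v‖ - ∫ r in (0 : ℝ)..t, ‖x - u r‖
      = ∫ r in (0 : ℝ)..t, (‖x - v‖ - ‖x - u r‖) := by
        rw [intervalIntegral.integral_sub intervalIntegrable_const hxu,
          intervalIntegral.integral_const, sub_zero, smul_eq_mul]
    _ ≤ ∫ r in (0 : ℝ)..t, ‖u r - v‖ :=
        intervalIntegral.integral_mono_on ht (intervalIntegrable_const.sub hxu)
          ((hu'.sub continuousOn_const).norm.intervalIntegrable) fun r _ => by
            linarith [norm_sub_le_norm_sub_add_norm_sub x (u r) v]

theorem mul_integral_katoBracket_le [NormedSpace ℝ X] {u : ℝ → X} {x v : X} {t lam : ℝ}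
    (ht : 0 ≤ t) (hlam : 0 < lam) (hu : ContinuousOn u (Icc 0 t)) :
    lam * ∫ r in (0 : ℝ)..t, katoBracket (u r - v) (-(lam⁻¹ • (x - v)))
      ≤ (∫ r in (0 : ℝ)..t, ‖x - u r‖) - ∫ r in (0 : ℝ)..t, ‖u r - v‖ := by
  have hu' : ContinuousOn u (uIcc 0 t) := by rwa [uIcc_of_le ht]
  have hxu : IntervalIntegrable (fun r => ‖x - u r‖) volume 0 t :=
    (continuousOn_const.sub hu').norm.intervalIntegrable
  have huv : IntervalIntegrable (fun r => ‖u r - v‖) volume 0 t :=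
    (hu'.sub continuousOn_const).norm.intervalIntegrable
  have hbr_int : IntervalIntegrable (fun r => katoBracket (u r - v) (-(lam⁻¹ • (x - v))))
      volume 0 t :=
    (hu.sub continuousOn_const).intervalIntegrable_katoBracket ht _
  have hbr := intervalIntegral.integral_mono_on ht hbr_int ((hxu.sub huv).div_const lam)
    fun r _ => katoBracket_sub_le (u r) x v hlam
  rw [intervalIntegral.integral_div, intervalIntegral.integral_sub hxu huv,
    le_div_iff₀ hlam] at hbr
  linarith

theorem norm_sub_le_of_integral_solution [NormedSpace ℝ X] {u : ℝ → X} {x v : X} {ω t lam : ℝ}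
    (ht : 0 < t) (hlam : 0 < lam) (hlamω : lam * ω < 1) (hu : ContinuousOn u (Icc 0 t))
    (hsol : ‖u t - v‖ ≤ ‖x - v‖ + (∫ r in (0 : ℝ)..t, katoBracket (u r - v) (-(lam⁻¹ • (x - v))))
      + ω * ∫ r in (0 : ℝ)..t, ‖u r - v‖) :
    ‖x - v‖ ≤ (lam / (t * (1 - lam * ω))) * ‖x - u t‖
      + ((2 - lam * ω) / (t * (1 - lam * ω))) * ∫ s in (0 : ℝ)..t, ‖x - u s‖ := by
  have hbr := mul_integral_katoBracket_le (x := x) (v := v) ht.le hlam hu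
  have hK := mul_norm_sub_sub_integral_le (x := x) (v := v) ht.le hu
  have htri := norm_sub_le_norm_sub_add_norm_sub x (u t) v
  have hD : 0 < t * (1 - lam * ω) := mul_pos ht (by linarith)
  rw [div_mul_eq_mul_div, div_mul_eq_mul_div, ← add_div, le_div_iff₀ hD]
  nlinarith [mul_le_mul_of_nonneg_left hsol hlam.le,
    mul_le_mul_of_nonneg_left hK (by linarith : (0 : ℝ) ≤ 1 - lam * ω)]

theorem mul_norm_sub_le_of_forall_le {u : ℝ → X} {x : X} {t C : ℝ} (ht : 0 ≤ t)
    (hu : ContinuousOn u (Icc 0 t))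
    (h : ∀ s ∈ Icc 0 t, ‖x - u t‖ ≤ ‖x - u s‖ + C * ‖x - u (t - s)‖) :
    t * ‖x - u t‖ ≤ (1 + C) * ∫ s in (0 : ℝ)..t, ‖x - u s‖ := by
  have hu' : ContinuousOn u (uIcc 0 t) := by rwa [uIcc_of_le ht]
  have hxu : IntervalIntegrable (fun r => ‖x - u r‖) volume 0 t :=
    (continuousOn_const.sub hu').norm.intervalIntegrable
  have hrev : IntervalIntegrable (fun s => ‖x - u (t - s)‖) volume 0 t := by
    simpa using (hxu.comp_sub_left t).symm
  have hmono := intervalIntegral.integral_mono_on ht intervalIntegrable_const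
    (hxu.add (hrev.const_mul C)) h
  rwa [intervalIntegral.integral_const, sub_zero, smul_eq_mul,
    intervalIntegral.integral_add hxu (hrev.const_mul C), intervalIntegral.integral_const_mul,
    intervalIntegral.integral_comp_sub_left (fun s => ‖x - u s‖), sub_self, sub_zero,
    ← one_add_mul] at hmono

end IntegralSolution

theorem norm_sub_le_of_lipschitz_semigroup {X : Type*} [NormedAddCommGroup X] {S : ℝ → X → X}
    {D : Set X} {ω : ℝ} (hω : 0 ≤ ω) (hmap : ∀ t ≥ (0 : ℝ), MapsTo (S t) D D)
    (hsemi : ∀ x ∈ D, ∀ s t : ℝ, 0 ≤ s → 0 ≤ t → S (s + t) x = S s (S t x))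
    (hlip : ∀ t ≥ (0 : ℝ), ∀ x ∈ D, ∀ y ∈ D, ‖S t x - S t y‖ ≤ exp (ω * t) * ‖x - y‖)
    {x : X} (hx : x ∈ D) {s t : ℝ} (hs : s ∈ Icc 0 t) :
    ‖x - S t x‖ ≤ ‖x - S s x‖ + exp (ω * t) * ‖x - S (t - s) x‖ := by
  have hts : 0 ≤ t - s := sub_nonneg.2 hs.2
  have hSt : S t x = S s (S (t - s) x) := by
    rw [← hsemi x hx s (t - s) hs.1 hts, add_sub_cancel]
  calc ‖x - S t x‖ ≤ ‖x - S s x‖ + ‖S s x - S t x‖ := norm_sub_le_norm_sub_add_norm_sub _ _ _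
    _ ≤ ‖x - S s x‖ + exp (ω * s) * ‖x - S (t - s) x‖ := by
        rw [hSt]
        gcongr
        exact hlip s hs.1 x hx _ (hmap _ hts hx)
    _ ≤ ‖x - S s x‖ + exp (ω * t) * ‖x - S (t - s) x‖ := by
        gcongr
        exact hs.2

theorem stmt9_general {X : Type*} [NormedAddCommGroup X] [NormedSpace ℝ X]
    (A : Set (X × X)) (ω : ℝ) (hω : 0 ≤ ω)
    (J : ℝ → X → X)
    (hJ : ∀ lam : ℝ, 0 < lam → lam * ω < 1 → ∀ x : X,
      (J lam x, lam⁻¹ • (x - J lam x)) ∈ A)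
    (S : ℝ → X → X)
    (hS0 : ∀ x ∈ closure (relDom A), S 0 x = x)
    (hSmap : ∀ t ≥ (0 : ℝ), MapsTo (S t) (closure (relDom A)) (closure (relDom A)))
    (hSsemi : ∀ x ∈ closure (relDom A), ∀ s t : ℝ, 0 ≤ s → 0 ≤ t →
      S (s + t) x = S s (S t x))
    (hScont : ∀ x ∈ closure (relDom A), ContinuousOn (fun s => S s x) (Set.Ici 0))
    (hSlip : ∀ t ≥ (0 : ℝ), ∀ x ∈ closure (relDom A), ∀ y ∈ closure (relDom A),
      ‖S t x - S t y‖ ≤ exp (ω * t) * ‖x - y‖)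
    -- mild solutions are integral solutions
    (hint : ∀ x ∈ closure (relDom A), ∀ v f : X, (v, f) ∈ A → ∀ s t : ℝ, 0 ≤ s → s ≤ t →
      ‖S t x - v‖ ≤ ‖S s x - v‖ + (∫ r in s..t, katoBracket (S r x - v) (-f))
        + ω * ∫ r in s..t, ‖S r x - v‖)
    (x : X) (hx : x ∈ closure (relDom A)) :
    (∀ t lam : ℝ, 0 < t → 0 < lam → lam * ω < 1 →
      ‖x - J lam x‖ ≤ (lam / (t * (1 - lam * ω))) * ‖x - S t x‖
        + ((2 - lam * ω) / (t * (1 - lam * ω))) * ∫ s in (0 : ℝ)..t, ‖x - S s x‖) ∧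
    (∀ t : ℝ, 0 < t → t * ω < 1 →
      ‖x - J t x‖ ≤ ((3 - t * ω + exp (ω * t)) / (1 - t * ω))
        * ((1 / t) * ∫ s in (0 : ℝ)..t, ‖x - S s x‖)) := by
  have horbit : ∀ t, ContinuousOn (fun s => S s x) (Icc 0 t) := fun _ =>
    (hScont x hx).mono Icc_subset_Ici_self
  have hres : ∀ t lam : ℝ, 0 < t → 0 < lam → lam * ω < 1 →
      ‖x - J lam x‖ ≤ (lam / (t * (1 - lam * ω))) * ‖x - S t x‖
        + ((2 - lam * ω) / (t * (1 - lam * ω))) * ∫ s in (0 : ℝ)..t, ‖x - S s x‖ := by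
    intro t lam ht hlam hlamω
    have hsol := hint x hx _ _ (hJ lam hlam hlamω x) 0 t le_rfl ht.le
    rw [hS0 x hx] at hsol
    exact norm_sub_le_of_integral_solution ht hlam hlamω (horbit t) hsol
  refine ⟨hres, fun t ht htω => ?_⟩
  set I := ∫ s in (0 : ℝ)..t, ‖x - S s x‖
  have hSt : t * ‖x - S t x‖ ≤ (1 + exp (ω * t)) * I :=
    mul_norm_sub_le_of_forall_le ht.le (horbit t) fun _ hs =>
      norm_sub_le_of_lipschitz_semigroup hω hSmap hSsemi hSlip hx hs
  have hD : 0 < t * (1 - t * ω) := mul_pos ht (by linarith)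
  calc ‖x - J t x‖ ≤ (t / (t * (1 - t * ω))) * ‖x - S t x‖
        + ((2 - t * ω) / (t * (1 - t * ω))) * I := hres t t ht ht htω
    _ = (t * ‖x - S t x‖ + (2 - t * ω) * I) / (t * (1 - t * ω)) := by ring
    _ ≤ ((1 + exp (ω * t)) * I + (2 - t * ω) * I) / (t * (1 - t * ω)) := by gcongr
    _ = ((3 - t * ω + exp (ω * t)) / (1 - t * ω)) * ((1 / t) * I) := by
        field_simp
        ring

/-- Let `A` be m-accretive of type `ω ≥ 0` generating the semigroup `S`
(whose orbits are integral solutions of `u̇ + Au ∋ 0`).  Then for every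
`x ∈ closure(dom A)` and `t, λ > 0` with `λω < 1`:
`‖x - J_λ x‖ ≤ (λ/(t(1-λω)))‖x - S(t)x‖ + ((2-λω)/(t(1-λω)))·∫₀ᵗ ‖x - S(s)x‖ ds`;
in particular, taking `λ = t` with `tω < 1`,
`‖x - J_t x‖ ≤ ((3 - tω + e^{ωt})/(1-tω))·(1/t)∫₀ᵗ ‖x - S(s)x‖ ds`. -/
theorem stmt9 {X : Type*} [NormedAddCommGroup X] [NormedSpace ℝ X]
    (A : Set (X × X)) (ω : ℝ) (hω : 0 ≤ ω) (hacc : AccretiveOfType A ω)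
    (J : ℝ → X → X)
    (hJ : ∀ lam : ℝ, 0 < lam → lam * ω < 1 → ∀ x : X,
      (J lam x, lam⁻¹ • (x - J lam x)) ∈ A)
    (S : ℝ → X → X)
    (hS0 : ∀ x ∈ closure (relDom A), S 0 x = x)
    (hSmap : ∀ t ≥ (0 : ℝ), MapsTo (S t) (closure (relDom A)) (closure (relDom A)))
    (hSsemi : ∀ x ∈ closure (relDom A), ∀ s t : ℝ, 0 ≤ s → 0 ≤ t →
      S (s + t) x = S s (S t x))
    (hScont : ∀ x ∈ closure (relDom A), ContinuousOn (fun s => S s x) (Set.Ici 0))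
    (hSlip : ∀ t ≥ (0 : ℝ), ∀ x ∈ closure (relDom A), ∀ y ∈ closure (relDom A),
      ‖S t x - S t y‖ ≤ exp (ω * t) * ‖x - y‖)
    -- mild solutions are integral solutions
    (hint : ∀ x ∈ closure (relDom A), ∀ v f : X, (v, f) ∈ A → ∀ s t : ℝ, 0 ≤ s → s ≤ t →
      ‖S t x - v‖ ≤ ‖S s x - v‖ + (∫ r in s..t, katoBracket (S r x - v) (-f))
        + ω * ∫ r in s..t, ‖S r x - v‖)
    (x : X) (hx : x ∈ closure (relDom A)) :
    (∀ t lam : ℝ, 0 < t → 0 < lam → lam * ω < 1 →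
      ‖x - J lam x‖ ≤ (lam / (t * (1 - lam * ω))) * ‖x - S t x‖
        + ((2 - lam * ω) / (t * (1 - lam * ω))) * ∫ s in (0 : ℝ)..t, ‖x - S s x‖) ∧
    (∀ t : ℝ, 0 < t → t * ω < 1 →
      ‖x - J t x‖ ≤ ((3 - t * ω + exp (ω * t)) / (1 - t * ω))
        * ((1 / t) * ∫ s in (0 : ℝ)..t, ‖x - S s x‖)) :=
  stmt9_general A ω hω J hJ S hS0 hSmap hSsemi hScont hSlip hint x hx
end

section
/- Let A be m-accretive of type ω ≥ 0, B a second operator dominated by A (i.e. |Bv| ≤ a|Av| + b(‖v‖) for some a ∈ (0,1) and increasing b : ℝ₊ → ℝ₊), such that A+B is m-accretive of type ω' ≥ 0. Let K^{A+B} denote the K-function of the couple (‖·‖, |(A+B)·|). Then for every τ > 0 with τ·max{ω,ω'} < 1 and every x ∈ X, t ∈ (0,τ): K^{A+B}(x,t)/t ≤ (a+2)·‖x − J_t^A x‖/t + b(‖x‖/(1−τω) + C), where J_t^A is the resolvent of A and C ≥ 0 is a constant independent of x (depending only on a fixed x₀ ∈ X, τω, and sup_{t∈(0,τ)}‖J_t^A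 x₀‖). -/
open Set Real
open scoped ENNReal NNReal

/-- The sum relation `A + B`. -/
def sumRel {X : Type*} [Add X] (A B : Set (X × X)) : Set (X × X) :=
  {p | ∃ f g, (p.1, f) ∈ A ∧ (p.1, g) ∈ B ∧ p.2 = f + g}

/-!
Choose `v = J_t^A x` in the infimum defining `K^{A+B}(x,t)`. Since `(v, (x - v)/t) ∈ A`,
domination gives `|(A+B)v| ≤ (1 + a)‖x - v‖/t + b(‖v‖)`, hence the estimate with `b(‖J_t^A x‖)`.
Testing accretivity of `A` against one fixed pair `(u, f) ∈ A` gives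
`(1 - tω)‖J_t^A x - u‖ ≤ ‖x - u - t f‖`, which bounds `‖J_t^A x‖` by `‖x‖/(1 - τω) + C`
uniformly in `t ∈ (0, τ)`; monotonicity of `b` concludes.
-/

section Accretive

variable {X : Type*} [NormedAddCommGroup X] [NormedSpace ℝ X] {A : Set (X × X)} {ω t : ℝ}

theorem AccretiveOfType.sub_norm_resolvent_le (hA : AccretiveOfType A ω) {x v u f : X}
    (hv : (v, t⁻¹ • (x - v)) ∈ A) (hu : (u, f) ∈ A) (ht : 0 < t) (htω : t * ω < 1) :
    (1 - t * ω) * ‖v - u‖ ≤ ‖x - u - t • f‖ := by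
  have hsum : v - u + t • (t⁻¹ • (x - v) - f) = x - u - t • f := by
    rw [smul_sub, smul_smul, mul_inv_cancel₀ ht.ne', one_smul]
    abel
  simpa only [hsum] using hA _ hv _ hu t ht htω

theorem AccretiveOfType.norm_resolvent_le (hA : AccretiveOfType A ω) (hω : 0 ≤ ω)
    {x v u f : X} {τ : ℝ} (hv : (v, t⁻¹ • (x - v)) ∈ A) (hu : (u, f) ∈ A) (ht : 0 < t)
    (htτ : t ≤ τ) (hτω : τ * ω < 1) :
    ‖v‖ ≤ ‖x‖ / (1 - τ * ω) + (‖u‖ + (‖u‖ + τ * ‖f‖) / (1 - τ * ω)) := by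
  have htω : t * ω ≤ τ * ω := mul_le_mul_of_nonneg_right htτ hω
  have hδ : 0 < 1 - τ * ω := by linarith
  have hdist : (1 - τ * ω) * ‖v - u‖ ≤ ‖x‖ + ‖u‖ + τ * ‖f‖ :=
    calc (1 - τ * ω) * ‖v - u‖ ≤ (1 - t * ω) * ‖v - u‖ := by gcongr
      _ ≤ ‖x - u - t • f‖ := hA.sub_norm_resolvent_le hv hu ht (by linarith)
      _ ≤ ‖x‖ + ‖u‖ + t * ‖f‖ := by
        grw [norm_sub_le, norm_sub_le, norm_smul, Real.norm_of_nonneg ht.le]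
      _ ≤ ‖x‖ + ‖u‖ + τ * ‖f‖ := by gcongr
  calc ‖v‖ ≤ ‖u‖ + ‖v - u‖ := norm_le_insert' v u
    _ ≤ ‖u‖ + (‖x‖ + ‖u‖ + τ * ‖f‖) / (1 - τ * ω) := by
      gcongr; rwa [le_div_iff₀' hδ]
    _ = _ := by ring

end Accretive

section SetNorm

variable {X : Type*} [NormedAddCommGroup X] {A B : Set (X × X)} {v f : X}

theorem setNormRel_le (h : (v, f) ∈ A) : setNormRel A v ≤ ‖f‖₊ := iInf₂_le f h

theorem setNormRel_sumRel_le (h : (v, f) ∈ A) :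
    setNormRel (sumRel A B) v ≤ ‖f‖₊ + setNormRel B v := by
  calc setNormRel (sumRel A B) v
      ≤ ⨅ (g : X) (_ : (v, g) ∈ B), ((‖f‖₊ : ℝ≥0∞) + ‖g‖₊) := le_iInf₂ fun g hg =>
        calc setNormRel (sumRel A B) v ≤ ‖f + g‖₊ := setNormRel_le ⟨f, g, h, hg, rfl⟩
          _ ≤ ‖f‖₊ + ‖g‖₊ := by exact_mod_cast nnnorm_add_le f g
    _ = ‖f‖₊ + setNormRel B v := by simp only [setNormRel, ENNReal.add_iInf]

end SetNorm

theorem Krel_sumRel_div_le {X : Type*} [NormedAddCommGroup X] [NormedSpace ℝ X]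
    {A B : Set (X × X)} {x v : X} {t a β : ℝ} (ha : 0 ≤ a) (ht : 0 < t)
    (hv : (v, t⁻¹ • (x - v)) ∈ A)
    (hdom : setNormRel B v ≤ ENNReal.ofReal a * setNormRel A v + ENNReal.ofReal β) :
    Krel (sumRel A B) x t / ENNReal.ofReal t
      ≤ ENNReal.ofReal (a + 2) * ((‖x - v‖₊ : ℝ≥0∞) / ENNReal.ofReal t)
        + ENNReal.ofReal β := by
  set e : ℝ≥0∞ := (‖x - v‖₊ : ℝ≥0∞)
  set T := ENNReal.ofReal t
  have hT0 : T ≠ 0 := by simpa [T] using ht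
  have hT : T ≠ ⊤ := ENNReal.ofReal_ne_top
  have hf : (‖t⁻¹ • (x - v)‖₊ : ℝ≥0∞) = e / T := by
    rw [nnnorm_smul, ENNReal.coe_mul, nnnorm_inv, ENNReal.coe_inv (by simpa using ht.ne'),
      ← enorm_eq_nnnorm t, ← ofReal_norm, Real.norm_of_nonneg ht.le, ENNReal.div_eq_inv_mul]
  have hAB : setNormRel (sumRel A B) v
      ≤ e / T + (ENNReal.ofReal a * (e / T) + ENNReal.ofReal β) := by
    grw [setNormRel_sumRel_le hv, hdom, setNormRel_le hv, hf]
  rw [ENNReal.div_le_iff hT0 hT]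
  calc Krel (sumRel A B) x t ≤ e + T * setNormRel (sumRel A B) v := iInf_le _ v
    _ ≤ e + T * (e / T + (ENNReal.ofReal a * (e / T) + ENNReal.ofReal β)) := by grw [hAB]
    _ = (ENNReal.ofReal (a + 2) * (e / T) + ENNReal.ofReal β) * T := by
      have he : e = e / T * T := (ENNReal.div_mul_cancel hT0 hT).symm
      rw [ENNReal.ofReal_add ha zero_le_two, ENNReal.ofReal_ofNat]
      generalize e / T = d at he ⊢
      rw [he]
      ring

theorem stmt13_general {X : Type*} [NormedAddCommGroup X] [NormedSpace ℝ X]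
    (A B : Set (X × X)) (ω ω' : ℝ) (hω : 0 ≤ ω)
    (haccA : AccretiveOfType A ω)
    (J : ℝ → X → X)
    (hJ : ∀ lam : ℝ, 0 < lam → lam * ω < 1 → ∀ x : X,
      (J lam x, lam⁻¹ • (x - J lam x)) ∈ A)
    (a : ℝ) (ha0 : 0 < a) (b : ℝ → ℝ) (hb_mono : Monotone b)
    (hdom : ∀ v : X, setNormRel B v
      ≤ ENNReal.ofReal a * setNormRel A v + ENNReal.ofReal (b ‖v‖))
    (τ : ℝ) (hτ : 0 < τ) (hτω : τ * max ω ω' < 1) :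
    ∃ C : ℝ, 0 ≤ C ∧ ∀ x : X, ∀ t : ℝ, 0 < t → t < τ →
      Krel (sumRel A B) x t / ENNReal.ofReal t
        ≤ ENNReal.ofReal (a + 2) * ((‖x - J t x‖₊ : ℝ≥0∞) / ENNReal.ofReal t)
          + ENNReal.ofReal (b (‖x‖ / (1 - τ * ω) + C)) := by
  have hτω1 : τ * ω < 1 := (mul_le_mul_of_nonneg_left (le_max_left ω ω') hτ.le).trans_lt hτω
  obtain ⟨u, f, huf⟩ : ∃ u f, (u, f) ∈ A :=
    ⟨_, _, hJ (τ / 2) (half_pos hτ) (by nlinarith) 0⟩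
  refine ⟨‖u‖ + (‖u‖ + τ * ‖f‖) / (1 - τ * ω), by positivity, fun x t ht htτ => ?_⟩
  have htω : t * ω < 1 := (mul_le_mul_of_nonneg_right htτ.le hω).trans_lt hτω1
  have hJx := hJ t ht htω x
  calc Krel (sumRel A B) x t / ENNReal.ofReal t
      ≤ ENNReal.ofReal (a + 2) * ((‖x - J t x‖₊ : ℝ≥0∞) / ENNReal.ofReal t)
        + ENNReal.ofReal (b ‖J t x‖) := Krel_sumRel_div_le ha0.le ht hJx (hdom _)
    _ ≤ _ := by
      gcongr
      exact hb_mono (haccA.norm_resolvent_le hω hJx huf ht htτ.le hτω1)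

/-- pointwise perturbation estimate: let `A` be m-accretive of type `ω ≥ 0`
with resolvent `J^A`, `B` dominated by `A` (`|Bv| ≤ a|Av| + b(‖v‖)` with `a ∈ (0,1)` and
`b` increasing, nonnegative), and `A+B` m-accretive of type `ω' ≥ 0`.  Then for every
`τ > 0` with `τ·max{ω,ω'} < 1` there is a constant `C ≥ 0`, independent of `x`, such that
for every `x ∈ X` and `t ∈ (0,τ)`:
`K^{A+B}(x,t)/t ≤ (a+2)·‖x - J_t^A x‖/t + b(‖x‖/(1-τω) + C)`. -/
theorem stmt13 {X : Type*} [NormedAddCommGroup X] [NormedSpace ℝ X]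
    (A B : Set (X × X)) (ω ω' : ℝ) (hω : 0 ≤ ω) (hω' : 0 ≤ ω')
    (haccA : AccretiveOfType A ω) (haccAB : AccretiveOfType (sumRel A B) ω')
    (J : ℝ → X → X)
    (hJ : ∀ lam : ℝ, 0 < lam → lam * ω < 1 → ∀ x : X,
      (J lam x, lam⁻¹ • (x - J lam x)) ∈ A)
    -- m-accretivity (range condition) for A + B
    (hsurjAB : ∀ lam : ℝ, 0 < lam → lam * ω' < 1 → ∀ y : X,
      ∃ p ∈ sumRel A B, p.1 + lam • p.2 = y)
    (a : ℝ) (ha0 : 0 < a) (ha1 : a < 1) (b : ℝ → ℝ) (hb_mono : Monotone b)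
    (hb_nonneg : ∀ r, 0 ≤ b r)
    (hdom : ∀ v : X, setNormRel B v
      ≤ ENNReal.ofReal a * setNormRel A v + ENNReal.ofReal (b ‖v‖))
    (τ : ℝ) (hτ : 0 < τ) (hτω : τ * max ω ω' < 1) :
    ∃ C : ℝ, 0 ≤ C ∧ ∀ x : X, ∀ t : ℝ, 0 < t → t < τ →
      Krel (sumRel A B) x t / ENNReal.ofReal t
        ≤ ENNReal.ofReal (a + 2) * ((‖x - J t x‖₊ : ℝ≥0∞) / ENNReal.ofReal t)
          + ENNReal.ofReal (b (‖x‖ / (1 - τ * ω) + C)) :=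
  stmt13_general A B ω ω' hω haccA J hJ a ha0 b hb_mono hdom τ hτ hτω
end
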